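/- Let u(n) = 108^n · ∑_{k=0}^n C(−1/3, k)·C(−1/6, k)·C(−1/3, n−k)·C(−1/6, n−k). Then for every natural number n, (n+1)³ · u(n+1) − 6(3n+2)(2n+1)(3n+1) · u(n) = 0. -/

import Mathlib

/-- Generalized binomial coefficient `C(x, k) = x(x-1)⋯(x-k+1)/k!`. -/
noncomputable def genBinom (x : ℝ) (k : ℕ) : ℝ :=
  (∏ i ∈ Finset.range k, (x - i)) / (Nat.factorial k)

noncomputable def u (n : ℕ) : ℝ :=
  108 ^ n * ∑ k ∈ Finset.range (n + 1),
    genBinom (-1/3) k * genBinom (-1/6) k *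
      genBinom (-1/3) (n - k) * genBinom (-1/6) (n - k)

/-!
With `a = binomTerm` we have `u n = ∑ₖ a k * a (n - k)` and
`a (k+1) / a k = 6(3k+1)(6k+1)/(k+1)^2`. Zeilberger's algorithm produces the polynomial
certificate `R = zeilbergerCert`: with `G(n,k) = R(n,k) a k a (n-k)` for `k ≤ n` and
`G(n,n+1) = 0` (this is `telescoper`), the `k`-th summand of
`(n+1)^3 u(n+1) - 6(3n+2)(2n+1)(3n+1) u n`, after splitting off `a (n+1) a 0`, is
`G(n,k+1) - G(n,k)`. What remains is `(n+1)^3 a(n+1) - G(n,0)`, which vanishes because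
`R(n,0) = 6(n+1)(3n+1)(6n+1)`.
-/

open Finset

lemma genBinom_succ (x : ℝ) (k : ℕ) :
    genBinom x (k + 1) = genBinom x k * (x - k) / (k + 1) := by
  simp only [genBinom, prod_range_succ, Nat.factorial_succ, Nat.cast_mul, Nat.cast_succ]
  field_simp

noncomputable def binomTerm (k : ℕ) : ℝ :=
  108 ^ k * (genBinom (-1/3) k * genBinom (-1/6) k)

lemma binomTerm_zero : binomTerm 0 = 1 := by
  simp [binomTerm, genBinom]

lemma binomTerm_succ (k : ℕ) :
    binomTerm (k + 1) = 6 * (3 * k + 1) * (6 * k + 1) / ((k : ℝ) + 1) ^ 2 * binomTerm k := by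
  rw [binomTerm, binomTerm, genBinom_succ, genBinom_succ, pow_succ]
  field_simp
  ring

lemma u_eq_sum_binomTerm (n : ℕ) :
    u n = ∑ k ∈ range (n + 1), binomTerm k * binomTerm (n - k) := by
  rw [u, mul_sum]
  refine sum_congr rfl fun k hk => ?_
  have hpow : (108 : ℝ) ^ n = 108 ^ k * 108 ^ (n - k) := by
    rw [← pow_add, Nat.add_sub_cancel' (Nat.lt_succ_iff.mp (mem_range.mp hk))]
  rw [hpow, binomTerm, binomTerm]
  ring

noncomputable def zeilbergerCert (n k : ℕ) : ℝ :=
  6 - 42 * k + 216 * (k : ℝ) ^ 3 + 60 * n - 162 * (n : ℝ) * k - 324 * (n : ℝ) * (k : ℝ) ^ 2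
    + 162 * (n : ℝ) ^ 2 + 108 * (n : ℝ) ^ 3

noncomputable def telescoper (n k : ℕ) : ℝ :=
  if k ≤ n then zeilbergerCert n k * binomTerm k * binomTerm (n - k) else 0

lemma zeilbergerCert_zero (n : ℕ) :
    zeilbergerCert n 0 = 6 * ((n : ℝ) + 1) * (3 * n + 1) * (6 * n + 1) := by
  rw [zeilbergerCert]
  push_cast
  ring

lemma telescoper_succ_sub_self {n k : ℕ} (hk : k ≤ n) :
    telescoper n (k + 1) - telescoper n k
      = ((n : ℝ) + 1) ^ 3 * (binomTerm (k + 1) * binomTerm (n - k))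
        - 6 * (3 * n + 2) * (2 * n + 1) * (3 * n + 1) * (binomTerm k * binomTerm (n - k)) := by
  rcases hk.lt_or_eq with hlt | rfl
  · obtain ⟨m, rfl⟩ : ∃ m, n = k + m + 1 := ⟨n - k - 1, by omega⟩
    rw [telescoper, telescoper, if_pos (by omega), if_pos (by omega),
      zeilbergerCert, zeilbergerCert, show k + m + 1 - (k + 1) = m by omega,
      show k + m + 1 - k = m + 1 by omega, binomTerm_succ k, binomTerm_succ m]
    push_cast
    field_simp
    ring
  · rw [telescoper, telescoper, if_neg (by omega), if_pos le_rfl, Nat.sub_self,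
      zeilbergerCert, binomTerm_succ k]
    field_simp
    ring

theorem u_recurrence (n : ℕ) :
    ((n : ℝ) + 1) ^ 3 * u (n + 1)
      - 6 * (3 * n + 2) * (2 * n + 1) * (3 * n + 1) * u n = 0 := by
  have hsplit : u (n + 1)
      = binomTerm (n + 1) + ∑ k ∈ range (n + 1), binomTerm (k + 1) * binomTerm (n - k) := by
    rw [u_eq_sum_binomTerm, sum_range_succ', add_comm, Nat.sub_zero, binomTerm_zero, one_mul]
    simp only [Nat.add_sub_add_right]
  have htelescope := sum_range_sub (telescoper n) (n + 1)
  rw [sum_congr rfl fun k hk => telescoper_succ_sub_self (Nat.lt_succ_iff.mp (mem_range.mp hk)),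
    sum_sub_distrib, ← mul_sum, ← mul_sum, ← u_eq_sum_binomTerm] at htelescope
  have hlast : telescoper n (n + 1) = 0 := if_neg (by omega)
  have hfirst : telescoper n 0 = ((n : ℝ) + 1) ^ 3 * binomTerm (n + 1) := by
    rw [telescoper, if_pos (Nat.zero_le n), zeilbergerCert_zero, binomTerm_succ n, Nat.sub_zero,
      binomTerm_zero]
    field_simp
  rw [hsplit]
  linear_combination htelescope + hlast - hfirst
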